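/- Let 𝓣 ⊆ 𝓕 be a chain contained in a chain 𝓤 ⊆ 𝓕 such that ν(𝓤) := {ν(A) : A ∈ 𝓤} is dense in [0,1]. Then the partial averages converge uniformly on 𝓣: for every ε > 0 there exists N_ε ∈ ℕ such that |ν_N(A) − ν(A)| < ε for all A ∈ 𝓣 and all N > N_ε. -/
import Mathlib


open Filter Set

/-- Partial average ν_N(A) = |A ∩ {1,…,N}| / N. -/
noncomputable def avg (A : Set ℕ) (N : ℕ) : ℝ := ((A ∩ Set.Icc 1 N).ncard : ℝ) / N

/-- Upper Cesàro limit ν⁺. -/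
noncomputable def nuPlus (A : Set ℕ) : ℝ := Filter.limsup (avg A) Filter.atTop

/-- Lower Cesàro limit ν⁻. -/
noncomputable def nuMinus (A : Set ℕ) : ℝ := Filter.liminf (avg A) Filter.atTop

/-- ν(A), defined as ν⁺(A); equals the Cesàro limit whenever it exists. -/
noncomputable def nu (A : Set ℕ) : ℝ := nuPlus A

/-- A ∈ 𝓕 : the Cesàro limit exists (and then equals ν(A) = ν⁺(A)). -/
def memF (A : Set ℕ) : Prop := Filter.Tendsto (avg A) Filter.atTop (nhds (nu A))

/-- A ∈ 𝓝 : null set, Cesàro limit exists and equals 0. -/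
def IsNull (A : Set ℕ) : Prop := Filter.Tendsto (avg A) Filter.atTop (nhds 0)

lemma avg_nonneg' (A : Set ℕ) (N : ℕ) : 0 ≤ avg A N := by
  unfold avg; positivity

lemma avg_le_one' (A : Set ℕ) (N : ℕ) : avg A N ≤ 1 := by
  unfold avg
  rcases Nat.eq_zero_or_pos N with h | h
  · simp [h]
  · rw [div_le_one (by positivity)]
    have : (A ∩ Set.Icc 1 N).ncard ≤ (Set.Icc 1 N).ncard :=
      Set.ncard_le_ncard inter_subset_right (Set.finite_Icc 1 N)
    have h2 : (Set.Icc 1 N).ncard = N := by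
      rw [← Finset.coe_Icc, Set.ncard_coe_finset, Nat.card_Icc]; omega
    rw [h2] at this
    exact_mod_cast this

lemma avg_mono' {A B : Set ℕ} (h : A ⊆ B) (N : ℕ) : avg A N ≤ avg B N := by
  unfold avg
  gcongr
  exact (Set.finite_Icc 1 N).inter_of_right B

lemma nu_mono' {A B : Set ℕ} (hA : memF A) (hB : memF B) (h : A ⊆ B) : nu A ≤ nu B :=
  le_of_tendsto_of_tendsto' hA hB (fun N => avg_mono' h N)

lemma nu_mem' {A : Set ℕ} (hA : memF A) : nu A ∈ Set.Icc (0:ℝ) 1 :=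
  ⟨ge_of_tendsto' hA (avg_nonneg' A), le_of_tendsto' hA (avg_le_one' A)⟩

theorem stmt14 (𝓣 𝓤 : Set (Set ℕ)) (h𝓣 : IsChain (· ⊆ ·) 𝓣) (h𝓤 : IsChain (· ⊆ ·) 𝓤)
    (hsub : 𝓣 ⊆ 𝓤) (hT : ∀ A ∈ 𝓣, memF A) (hU : ∀ A ∈ 𝓤, memF A)
    (hdense : Set.Icc (0 : ℝ) 1 ⊆ closure (nu '' 𝓤)) :
    ∀ ε > (0 : ℝ), ∃ Nε : ℕ, ∀ A ∈ 𝓣, ∀ N > Nε, |avg A N - nu A| < ε := by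
  intro ε hε
  have hcov : Set.Icc (0:ℝ) 1 ⊆ ⋃ y ∈ nu '' 𝓤, Metric.ball y (ε/6) := by
    intro x hx
    obtain ⟨y, hy, hxy⟩ := Metric.mem_closure_iff.mp (hdense hx) (ε/6) (by positivity)
    exact Set.mem_biUnion hy (Metric.mem_ball.mpr hxy)
  obtain ⟨t, hts, htfin, htcov⟩ :=
    isCompact_Icc.elim_finite_subcover_image (fun y _ => Metric.isOpen_ball) hcov
  have hchoice : ∀ y ∈ t, ∃ B, B ∈ 𝓤 ∧ nu B = y ∧ ∃ M : ℕ, ∀ N ≥ M, |avg B N - nu B| < ε/6 := by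
    intro y hy
    obtain ⟨B, hB, hBy⟩ := hts hy
    refine ⟨B, hB, hBy, ?_⟩
    obtain ⟨M, hM⟩ := Metric.tendsto_atTop.mp (hU B hB) (ε/6) (by positivity)
    exact ⟨M, fun N hN => by simpa [Real.dist_eq] using hM N hN⟩
  choose! B hB𝓤 hBnu M hM using hchoice
  obtain ⟨Nε, hNε⟩ := (htfin.image M).bddAbove
  refine ⟨Nε, fun A hA N hN => ?_⟩
  have hAF : memF A := hT A hA
  have hAU : A ∈ 𝓤 := hsub hA
  have hA01 := nu_mem' hAF
  have hNy : ∀ y ∈ t, |avg (B y) N - y| < ε/6 := by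
    intro y hy
    have h1 : M y ≤ Nε := hNε (Set.mem_image_of_mem M hy)
    have := hM y hy N (by omega)
    rwa [hBnu y hy] at this
  rw [abs_sub_lt_iff]
  constructor
  · -- avg A N - nu A < ε
    by_cases hcase : nu A + ε/2 ≤ 1
    · have hx : nu A + ε/2 ∈ Set.Icc (0:ℝ) 1 := ⟨by linarith [hA01.1], hcase⟩
      obtain ⟨y, hyt, hyb⟩ := Set.mem_iUnion₂.mp (htcov hx)
      rw [Metric.mem_ball, Real.dist_eq, abs_lt] at hyb
      have hlt : nu A < y := by linarith
      have hsubAB : A ⊆ B y := by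
        rcases h𝓤.total hAU (hB𝓤 y hyt) with h | h
        · exact h
        · exfalso
          have := nu_mono' (hU _ (hB𝓤 y hyt)) hAF h
          rw [hBnu y hyt] at this; linarith
      have h1 : avg A N ≤ avg (B y) N := avg_mono' hsubAB N
      have h2 := hNy y hyt
      rw [abs_lt] at h2
      linarith
    · have := avg_le_one' A N; linarith
  · -- nu A - avg A N < ε
    by_cases hcase : 0 ≤ nu A - ε/2
    · have hx : nu A - ε/2 ∈ Set.Icc (0:ℝ) 1 := ⟨hcase, by linarith [hA01.2]⟩
      obtain ⟨y, hyt, hyb⟩ := Set.mem_iUnion₂.mp (htcov hx)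
      rw [Metric.mem_ball, Real.dist_eq, abs_lt] at hyb
      have hlt : y < nu A := by linarith
      have hsubBA : B y ⊆ A := by
        rcases h𝓤.total (hB𝓤 y hyt) hAU with h | h
        · exact h
        · exfalso
          have := nu_mono' hAF (hU _ (hB𝓤 y hyt)) h
          rw [hBnu y hyt] at this; linarith
      have h1 : avg (B y) N ≤ avg A N := avg_mono' hsubBA N
      have h2 := hNy y hyt
      rw [abs_lt] at h2
      linarith
    · have := avg_nonneg' A N; linarith
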